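/- (Lemma 4) Assume tr(R) = N_t and fix η ∈ [0, 1]. Define matrices recursively: M_0 = R; for each k ≥ 0, U^H M_k U is diagonal with nonnegative real entries, and letting μ_{k,1} ≥ ⋯ ≥ μ_{k,N_t} be these diagonal entries sorted in decreasing order with σ_k a permutation of {1, …, N_t} such that (U^H M_k U)_{σ_k(t), σ_k(t)} = μ_{k,t}, set X_k = √ρ · [u_{σ_k(1)}, …, u_{σ_k(T)}] (where u_j is the j-th column of U), E_k = M_k − M_k X_k (I_T + X_k^H M_k X_k)^{-1} X_k^H M_k, and M_{k+1} = η² E_k + (1 − η²) R. Then for every i ≥ 0, (1/N_t) tr(E_i) = 1 − (1/N_t) Σ_{k=0}^{i} Σ_{t=1}^{T} η^{2(i−k)} ρ μ_{k,t}² / (ρ μ_{k,t} + 1). -/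

import Mathlib

open Matrix BigOperators Finset

/-!
Training along eigendirections of the prediction covariance `M` makes both `Xᴴ M X` and
`Xᴴ M² X` diagonal, so the trace of the correction term of the Kalman update collapses to
`∑ₜ ρ μₜ² / (ρ μₜ + 1)`. Taking traces in the prediction step then gives a scalar first-order
linear recursion for the deficit `N_t − tr E_k`, which unrolls to the stated sum.
-/

section Unrolling

variable {R : Type*} [CommSemiring R]

theorem eq_sum_pow_mul_of_succ_eq {x s : ℕ → R} {q : R} (h0 : x 0 = s 0)
    (hsucc : ∀ k, x (k + 1) = q * x k + s (k + 1)) (i : ℕ) :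
    x i = ∑ k ∈ range (i + 1), q ^ (i - k) * s k := by
  induction i with
  | zero => simp [h0]
  | succ i ih =>
    rw [hsucc, ih, sum_range_succ _ (i + 1), mul_sum, Nat.sub_self, pow_zero, one_mul]
    congr 1
    refine sum_congr rfl fun k hk => ?_
    rw [Nat.succ_sub (Nat.le_of_lt_succ (mem_range.mp hk)), pow_succ']
    ring

end Unrolling

section KalmanTrace

variable {m n : Type*}

theorem conjTranspose_submatrix_mul_mul_submatrix [Fintype n] {α : Type*} [Semiring α]
    [Star α] (U N : Matrix n n α) (g : m → n) :
    (U.submatrix id g)ᴴ * N * U.submatrix id g = (Uᴴ * N * U).submatrix g g := by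
  rw [conjTranspose_submatrix, submatrix_mul _ _ g id g Function.bijective_id,
    submatrix_mul _ _ g id id Function.bijective_id, submatrix_id_id]

theorem inv_one_add_diagonal [Fintype m] [DecidableEq m] {𝕜 : Type*} [Field 𝕜] {a : m → 𝕜}
    (ha : ∀ t, 1 + a t ≠ 0) :
    (1 + diagonal a)⁻¹ = diagonal fun t => (1 + a t)⁻¹ := by
  refine inv_eq_left_inv ?_
  rw [← diagonal_one, diagonal_add, diagonal_mul_diagonal]
  exact congrArg diagonal (funext fun t => inv_mul_cancel₀ (ha t))

theorem trace_sub_mul_inv_mul_of_diagonal [Fintype m] [DecidableEq m] [Fintype n] {𝕜 : Type*}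
    [Field 𝕜] (M : Matrix n n 𝕜) (X : Matrix n m 𝕜) (Y : Matrix m n 𝕜) {a b : m → 𝕜}
    (ha : Y * M * X = diagonal a) (hb : Y * (M * M) * X = diagonal b)
    (ha1 : ∀ t, 1 + a t ≠ 0) :
    trace (M - M * X * (1 + Y * M * X)⁻¹ * Y * M) = trace M - ∑ t, b t / (1 + a t) := by
  have hcycle : trace (M * X * (1 + Y * M * X)⁻¹ * Y * M)
      = trace (Y * (M * M) * X * (1 + Y * M * X)⁻¹) := by
    rw [Matrix.mul_assoc _ Y M, trace_mul_comm]
    simp only [Matrix.mul_assoc]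
  rw [trace_sub, hcycle, hb, ha, inv_one_add_diagonal ha1, diagonal_mul_diagonal,
    trace_diagonal]
  simp only [div_eq_mul_inv]

theorem trace_sub_kalman_gain_of_eigen_training [Fintype m] [DecidableEq m] [Fintype n]
    [DecidableEq n] {ρ : ℝ} (hρ : 0 ≤ ρ) {U M : Matrix n n ℂ}
    (hU : U * Uᴴ = 1) {μ : n → ℝ} (hμ : ∀ j, 0 ≤ μ j)
    (hdiag : Uᴴ * M * U = diagonal fun j => (μ j : ℂ)) {g : m → n} (hg : g.Injective)
    {X : Matrix n m ℂ} (hX : X = (Real.sqrt ρ : ℂ) • U.submatrix id g) :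
    trace (M - M * X * (1 + Xᴴ * M * X)⁻¹ * Xᴴ * M)
      = trace M - ((∑ t, ρ * μ (g t) ^ 2 / (ρ * μ (g t) + 1) : ℝ) : ℂ) := by
  have hsandwich : ∀ N : Matrix n n ℂ, ∀ d : n → ℂ, Uᴴ * N * U = diagonal d →
      Xᴴ * N * X = diagonal fun t => (ρ : ℂ) * d (g t) := by
    intro N d hN
    have hρc : star (Real.sqrt ρ : ℂ) * (Real.sqrt ρ : ℂ) = ρ := by
      rw [Complex.star_def, Complex.conj_ofReal, ← Complex.ofReal_mul, Real.mul_self_sqrt hρ]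
    rw [hX, conjTranspose_smul, smul_mul, smul_mul, Matrix.mul_smul, smul_smul, hρc,
      conjTranspose_submatrix_mul_mul_submatrix, hN, submatrix_diagonal _ _ hg,
      ← diagonal_smul]
    rfl
  have hsq : Uᴴ * (M * M) * U = diagonal fun j => (μ j : ℂ) * μ j := by
    rw [← diagonal_mul_diagonal, ← hdiag]
    simp only [Matrix.mul_assoc, ← Matrix.mul_assoc U Uᴴ, hU, Matrix.one_mul]
  rw [trace_sub_mul_inv_mul_of_diagonal M X Xᴴ (hsandwich M _ hdiag) (hsandwich _ _ hsq)]
  · push_cast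
    congr 1
    refine sum_congr rfl fun t _ => ?_
    ring
  · intro t
    exact_mod_cast (add_pos_of_pos_of_nonneg one_pos (mul_nonneg hρ (hμ (g t)))).ne'

end KalmanTrace

theorem stmt_8_general (Nt T : ℕ) (hNt : 0 < Nt) (hTN : T ≤ Nt)
    (ρ : ℝ) (hρ : 0 < ρ) (η : ℝ)
    (U : Matrix (Fin Nt) (Fin Nt) ℂ) (hU2 : U * Uᴴ = 1)
    (R : Matrix (Fin Nt) (Fin Nt) ℂ)
    (htr : R.trace = (Nt : ℂ))
    (M E : ℕ → Matrix (Fin Nt) (Fin Nt) ℂ)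
    (X : ℕ → Matrix (Fin Nt) (Fin T) ℂ)
    (mu : ℕ → Fin Nt → ℝ) (σ : ℕ → Equiv.Perm (Fin Nt))
    (hM0 : M 0 = R)
    (hdiag : ∀ k, Uᴴ * M k * U
      = Matrix.diagonal (fun j => (mu k ((σ k).symm j) : ℂ)))
    (hmu_nn : ∀ k t, 0 ≤ mu k t)
    (hX : ∀ k, X k = fun i t => (Real.sqrt ρ : ℂ) * U i (σ k (Fin.castLE hTN t)))
    (hE : ∀ k, E k = M k - M k * X k * (1 + (X k)ᴴ * M k * X k)⁻¹ * (X k)ᴴ * M k)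
    (hMrec : ∀ k, M (k + 1) = ((η : ℂ) ^ 2) • E k + (1 - (η : ℂ) ^ 2) • R) :
    ∀ i : ℕ, (1 / (Nt : ℝ)) * (E i).trace.re
      = 1 - (1 / (Nt : ℝ)) * ∑ k ∈ Finset.range (i + 1), ∑ t : Fin T,
          η ^ (2 * (i - k)) * ρ * mu k (Fin.castLE hTN t) ^ 2
            / (ρ * mu k (Fin.castLE hTN t) + 1) := by
  set s : ℕ → ℝ := fun k => ∑ t : Fin T,
    ρ * mu k (Fin.castLE hTN t) ^ 2 / (ρ * mu k (Fin.castLE hTN t) + 1)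
  have hcorrect : ∀ k, (E k).trace.re = (M k).trace.re - s k := fun k => by
    have htrace := trace_sub_kalman_gain_of_eigen_training hρ.le hU2 (fun j => hmu_nn k _) (hdiag k)
      ((σ k).injective.comp (Fin.castLE_injective hTN)) (X := X k) (by rw [hX k]; rfl)
    simp only [Function.comp_apply, Equiv.symm_apply_apply] at htrace
    rw [hE k, htrace, Complex.sub_re, Complex.ofReal_re]
  have hpredict : ∀ k, (M (k + 1)).trace.re = η ^ 2 * (E k).trace.re + (1 - η ^ 2) * Nt :=
    fun k => by
      rw [hMrec k, trace_add, trace_smul, trace_smul, htr]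
      simp [← Complex.ofReal_pow]
  have hdeficit := eq_sum_pow_mul_of_succ_eq (x := fun k => Nt - (E k).trace.re) (s := s)
    (q := η ^ 2) (by simp [hcorrect, hM0, htr]) (fun k => by simp only [hcorrect, hpredict]; ring)
  intro i
  have hinner : ∀ k, ∑ t : Fin T, η ^ (2 * (i - k)) * ρ * mu k (Fin.castLE hTN t) ^ 2
      / (ρ * mu k (Fin.castLE hTN t) + 1) = (η ^ 2) ^ (i - k) * s k := fun k => by
    rw [mul_sum, ← pow_mul]
    exact sum_congr rfl fun t _ => by ring
  simp only [hinner, ← hdeficit i]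
  field_simp
  ring

/-- Lemma 4: under the closed-loop Kalman recursion with optimal
eigen-direction training at each block, the MSE at block `i` is
`(1/N_t) tr(E_i) = 1 − (1/N_t) Σ_{k=0}^{i} Σ_{t=1}^{T} η^{2(i−k)} ρ μ_{k,t}²/(ρ μ_{k,t}+1)`. -/
theorem stmt_8 (Nt T : ℕ) (hNt : 0 < Nt) (hT : 0 < T) (hTN : T ≤ Nt)
    (ρ : ℝ) (hρ : 0 < ρ) (η : ℝ) (hη0 : 0 ≤ η) (hη1 : η ≤ 1)
    (U : Matrix (Fin Nt) (Fin Nt) ℂ) (hU1 : Uᴴ * U = 1) (hU2 : U * Uᴴ = 1)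
    (lam : Fin Nt → ℝ) (hnn : ∀ t, 0 ≤ lam t) (hmono : Antitone lam)
    (R : Matrix (Fin Nt) (Fin Nt) ℂ)
    (hR : R = U * Matrix.diagonal (fun t => (lam t : ℂ)) * Uᴴ)
    (htr : R.trace = (Nt : ℂ))
    (M E : ℕ → Matrix (Fin Nt) (Fin Nt) ℂ)
    (X : ℕ → Matrix (Fin Nt) (Fin T) ℂ)
    (mu : ℕ → Fin Nt → ℝ) (σ : ℕ → Equiv.Perm (Fin Nt))
    (hM0 : M 0 = R)
    (hdiag : ∀ k, Uᴴ * M k * U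
      = Matrix.diagonal (fun j => (mu k ((σ k).symm j) : ℂ)))
    (hmu_nn : ∀ k t, 0 ≤ mu k t)
    (hmu_mono : ∀ k, Antitone (mu k))
    (hX : ∀ k, X k = fun i t => (Real.sqrt ρ : ℂ) * U i (σ k (Fin.castLE hTN t)))
    (hE : ∀ k, E k = M k - M k * X k * (1 + (X k)ᴴ * M k * X k)⁻¹ * (X k)ᴴ * M k)
    (hMrec : ∀ k, M (k + 1) = ((η : ℂ) ^ 2) • E k + (1 - (η : ℂ) ^ 2) • R) :
    ∀ i : ℕ, (1 / (Nt : ℝ)) * (E i).trace.re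
      = 1 - (1 / (Nt : ℝ)) * ∑ k ∈ Finset.range (i + 1), ∑ t : Fin T,
          η ^ (2 * (i - k)) * ρ * mu k (Fin.castLE hTN t) ^ 2
            / (ρ * mu k (Fin.castLE hTN t) + 1) :=
  stmt_8_general Nt T hNt hTN ρ hρ η U hU2 R htr M E X mu σ hM0 hdiag hmu_nn hX hE hMrec
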